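/- Let Φ be a nice extended norm. The following are equivalent: (1) FIN(Φ) = EXH(Φ); (2) EXH(Φ) is an F_σ subset of ℝ^ℕ with the product topology (a countable union of closed sets); (3) the metric space FIN(Φ) with distance d(x,y) = Φ(x − y) is separable; (4) for every σ : ℕ → ℝ, setting φ_σ(A) = Φ(P_A σ), one has {A ⊆ ℕ : φ_σ(A ∖ [0,n)) → 0 as n → ∞} = {A ⊆ ℕ : φ_σ(A) < ∞}. -/

import Mathlib

open Filter Topology ENNReal

/-- A nice extended norm on `ℝ^ℕ`: an extended norm which is finite on finitely supported
sequences, monotone, and lower semicontinuous.  `Set.indicator A x` plays the role of the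
projection `P_A x`. -/
structure NiceExtNorm where
  Φ : (ℕ → ℝ) → ℝ≥0∞
  eq_zero : ∀ x, Φ x = 0 ↔ x = 0
  smul_eq : ∀ (c : ℝ) (x), Φ (c • x) = ENNReal.ofReal |c| * Φ x
  add_le : ∀ x y, Φ (x + y) ≤ Φ x + Φ y
  finite : ∀ x : ℕ → ℝ, (Function.support x).Finite → Φ x < ⊤
  mono : ∀ x y, (∀ n, |x n| ≤ |y n|) → Φ x ≤ Φ y
  lsc : ∀ x, Φ x = ⨆ N : ℕ, Φ (Set.indicator (Set.Iio N) x)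

/-- `FIN(Φ)`. -/
def FIN (N : NiceExtNorm) : Set (ℕ → ℝ) := {x | N.Φ x < ⊤}

/-- `EXH(Φ)`. -/
def EXH (N : NiceExtNorm) : Set (ℕ → ℝ) :=
  {x | Tendsto (fun M : ℕ => N.Φ (Set.indicator {n | M ≤ n} x)) atTop (𝓝 0)}

/-- A set in `ℝ^ℕ` (product topology) is F_σ if it is a countable union of closed sets. -/
def IsFsigmaPi (S : Set (ℕ → ℝ)) : Prop :=
  ∃ C : ℕ → Set (ℕ → ℝ), (∀ n, IsClosed (C n)) ∧ S = ⋃ n, C n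

section Basics
variable (N : NiceExtNorm)

lemma phi_zero : N.Φ 0 = 0 := (N.eq_zero 0).2 rfl

lemma phi_neg (x : ℕ → ℝ) : N.Φ (-x) = N.Φ x := by
  have := N.smul_eq (-1) x
  simpa using this

lemma phi_sub_comm (x y : ℕ → ℝ) : N.Φ (x - y) = N.Φ (y - x) := by
  rw [← phi_neg N (y - x)]; ring_nf

lemma phi_le_add (x y : ℕ → ℝ) : N.Φ x ≤ N.Φ y + N.Φ (x - y) := by
  have := N.add_le y (x - y)
  simpa using this

/-- the tail seminorms are antitone -/
lemma tail_antitone (x : ℕ → ℝ) :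
    Antitone (fun M : ℕ => N.Φ (Set.indicator {n | M ≤ n} x)) := by
  intro a b hab
  apply N.mono
  intro n
  by_cases h : b ≤ n
  · simp [Set.indicator_apply, h, le_trans hab h]
  · simp [Set.indicator_apply, h]

lemma split_at (x : ℕ → ℝ) (M : ℕ) :
    x = Set.indicator (Set.Iio M) x + Set.indicator {n | M ≤ n} x := by
  funext n
  by_cases h : n < M
  · simp [Set.indicator_apply, h, Set.mem_Iio, not_le.2 h]
  · simp [Set.indicator_apply, h, Set.mem_Iio, le_of_not_gt h]

lemma head_fin (x : ℕ → ℝ) (M : ℕ) : N.Φ (Set.indicator (Set.Iio M) x) < ⊤ := by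
  apply N.finite
  apply Set.Finite.subset (Set.finite_Iio M)
  intro n hn
  simp only [Function.mem_support, Set.indicator_apply] at hn
  simp only [Set.mem_Iio]
  by_contra hc
  simp [Set.indicator_apply, Set.mem_Iio, hc] at hn

lemma exh_subset_fin : EXH N ⊆ FIN N := by
  intro x hx
  have h1 : ∀ᶠ M in atTop, N.Φ (Set.indicator {n | M ≤ n} x) < 1 :=
    hx.eventually_lt_const (by norm_num)
  obtain ⟨M, hM⟩ := h1.exists
  have : N.Φ x ≤ N.Φ (Set.indicator (Set.Iio M) x) + N.Φ (Set.indicator {n | M ≤ n} x) := by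
    nth_rewrite 1 [split_at x M]; exact N.add_le _ _
  exact lt_of_le_of_lt this
    (ENNReal.add_lt_top.2 ⟨head_fin N x M, lt_trans hM (by norm_num)⟩)

/-- core block lemma: if `x ∈ FIN ∖ EXH` there are `δ > 0` and blocks each of `Φ`-size `≥ δ`. -/
lemma blocks (x : ℕ → ℝ) (hx : x ∈ FIN N) (hnx : x ∉ EXH N) :
    ∃ (δ : ℝ≥0∞) (M : ℕ → ℕ), 0 < δ ∧ δ ≠ ⊤ ∧ M 0 = 0 ∧ StrictMono M ∧
      ∀ k, δ ≤ N.Φ (Set.indicator (Set.Ico (M k) (M (k+1))) x) := by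
  set f : ℕ → ℝ≥0∞ := fun M => N.Φ (Set.indicator {n | M ≤ n} x) with hf
  have hanti : Antitone f := tail_antitone N x
  have htends : Tendsto f atTop (𝓝 (⨅ i, f i)) := tendsto_atTop_iInf hanti
  set δ₀ : ℝ≥0∞ := ⨅ i, f i with hδ₀
  have hδ0pos : 0 < δ₀ := by
    rcases eq_or_ne δ₀ 0 with h | h
    · exact absurd (by rw [h] at htends; exact htends) hnx
    · exact pos_iff_ne_zero.2 h
  have hδ0top : δ₀ ≠ ⊤ := by
    have : δ₀ ≤ f 0 := iInf_le f 0
    have hf0 : f 0 ≤ N.Φ x := by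
      apply N.mono; intro n; simp [Set.indicator_apply]
    exact ne_top_of_le_ne_top hx.ne (this.trans hf0)
  have hhalf : δ₀ / 2 < δ₀ := ENNReal.half_lt_self hδ0pos.ne' hδ0top
  -- for each L there is N' > L with Φ (indicator (Ico L N') x) > δ₀/2
  have key : ∀ L : ℕ, ∃ N' : ℕ, L < N' ∧
      δ₀ / 2 ≤ N.Φ (Set.indicator (Set.Ico L N') x) := by
    intro L
    have h1 : δ₀ / 2 < f L := lt_of_lt_of_le hhalf (iInf_le f L)
    have h1' : δ₀ / 2 < N.Φ (Set.indicator {n | L ≤ n} x) := h1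
    rw [N.lsc (Set.indicator {n | L ≤ n} x)] at h1'
    rename' h1' => h1
    obtain ⟨N', hN'⟩ := lt_iSup_iff.1 h1
    refine ⟨max N' (L+1), by omega, ?_⟩
    have heq : Set.indicator (Set.Iio N') (Set.indicator {n | L ≤ n} x)
        = Set.indicator (Set.Ico L N') x := by
      funext n
      by_cases h1 : n < N' <;> by_cases h2 : L ≤ n <;>
        simp [Set.indicator_apply, Set.mem_Iio, Set.mem_Ico, h1, h2]
    have hmono : N.Φ (Set.indicator (Set.Ico L N') x)
        ≤ N.Φ (Set.indicator (Set.Ico L (max N' (L+1))) x) := by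
      apply N.mono; intro n
      by_cases h1 : L ≤ n ∧ n < N'
      · have h2 : L ≤ n ∧ n < max N' (L+1) := ⟨h1.1, lt_of_lt_of_le h1.2 (le_max_left _ _)⟩
        simp [Set.indicator_apply, Set.mem_Ico, h1, h2]
      · simp [Set.indicator_apply, Set.mem_Ico, h1]
    rw [heq] at hN'
    exact le_trans hN'.le hmono
  choose F hF1 hF2 using key
  refine ⟨δ₀ / 2, fun k => Nat.rec 0 (fun _ ih => F ih) k, ENNReal.half_pos hδ0pos.ne',
    (lt_of_lt_of_le hhalf (le_top.trans_eq rfl) |>.trans_le le_top).ne, rfl,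
    strictMono_nat_of_lt_succ (fun k => hF1 _), fun k => hF2 _⟩


/-- block index function for a strictly monotone enumeration starting at 0 -/
lemma blockIdx (M : ℕ → ℕ) (hM0 : M 0 = 0) (hM : StrictMono M) :
    ∃ B : ℕ → ℕ, (∀ n, M (B n) ≤ n) ∧ (∀ n, n < M (B n + 1)) ∧
      (∀ k n, M k ≤ n → k ≤ B n) ∧ Tendsto B atTop atTop := by
  have hex : ∀ n : ℕ, ∃ k, n < M (k + 1) := fun n =>
    ⟨n, lt_of_lt_of_le (Nat.lt_succ_self n) (hM.le_apply)⟩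
  refine ⟨fun n => Nat.find (hex n), ?_, fun n => Nat.find_spec (hex n), ?_, ?_⟩
  · intro n
    show M (Nat.find (hex n)) ≤ n
    rcases Nat.eq_zero_or_pos (Nat.find (hex n)) with h | h
    · rw [h, hM0]; exact Nat.zero_le n
    · have := Nat.find_min (hex n) (Nat.sub_lt h Nat.one_pos)
      push_neg at this
      have h2 : Nat.find (hex n) - 1 + 1 = Nat.find (hex n) := by omega
      rwa [h2] at this
  · intro k n hkn
    by_contra hc
    push_neg at hc
    have h1 : M (Nat.find (hex n) + 1) ≤ M k := hM.monotone (by omega)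
    have := Nat.find_spec (hex n)
    omega
  · apply tendsto_atTop_atTop.2
    intro k
    refine ⟨M k, fun n hn => ?_⟩
    by_contra hc
    push_neg at hc
    have h1 : M (Nat.find (hex n) + 1) ≤ M k := hM.monotone (by omega)
    have := Nat.find_spec (hex n)
    omega


/-- elementary sequences -/
def esq (n : ℕ) : ℕ → ℝ := fun m => if m = n then 1 else 0

lemma indicator_succ (z : ℕ → ℝ) (M : ℕ) :
    Set.indicator (Set.Iio (M+1)) z = Set.indicator (Set.Iio M) z + (z M) • esq M := by
  funext m
  simp only [Pi.add_apply, Pi.smul_apply, smul_eq_mul, esq, Set.indicator_apply, Set.mem_Iio]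
  rcases lt_trichotomy m M with h | h | h
  · simp [h, h.trans (Nat.lt_succ_self M), h.ne]
  · simp [h]
  · have h1 : ¬ m < M + 1 := by omega
    have h2 : ¬ m < M := by omega
    simp [h.ne', h1, h2]

lemma sum_bound (z : ℕ → ℝ) (M : ℕ) :
    N.Φ (Set.indicator (Set.Iio M) z)
      ≤ ∑ n ∈ Finset.range M, ENNReal.ofReal |z n| * N.Φ (esq n) := by
  induction M with
  | zero =>
    have : Set.indicator (Set.Iio 0) z = 0 := by
      funext m; simp [Set.indicator_apply]
    rw [this, phi_zero N]; simp
  | succ M ih =>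
    rw [indicator_succ, Finset.sum_range_succ]
    refine le_trans (N.add_le _ _) (add_le_add ih ?_)
    rw [N.smul_eq]

lemma exists_small_r (T ε : ℝ≥0∞) (hT : T ≠ ⊤) (hε : 0 < ε) :
    ∃ r : ℝ, 0 < r ∧ ENNReal.ofReal r * T < ε := by
  rcases eq_or_ne ε ⊤ with h | h
  · refine ⟨1, one_pos, ?_⟩
    rw [h]
    calc ENNReal.ofReal 1 * T = T := by simp
      _ < ⊤ := lt_top_iff_ne_top.2 hT
  set c : ℝ≥0∞ := ε / (T + 1) with hc
  have hc0 : c ≠ 0 := by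
    simp [hc, ENNReal.div_eq_zero_iff, hε.ne', hT]
  have hctop : c ≠ ⊤ := by
    simp [hc, ENNReal.div_eq_top, h, hε.ne']
  refine ⟨c.toReal, ENNReal.toReal_pos hc0 hctop, ?_⟩
  rw [ENNReal.ofReal_toReal hctop]
  calc c * T < c * (T + 1) := by
        exact ENNReal.mul_lt_mul_right hc0 hctop (ENNReal.lt_add_right hT one_ne_zero)
      _ = ε := by
        rw [hc, ENNReal.div_mul_cancel (by simp) (by simp [hT])]


lemma esq_phi_fin (n : ℕ) : N.Φ (esq n) ≠ ⊤ := by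
  refine (N.finite _ ?_).ne
  apply Set.Finite.subset (Set.finite_singleton n)
  intro m hm
  simp only [Function.mem_support, esq] at hm
  by_contra hc
  simp only [Set.mem_singleton_iff] at hc
  simp [hc] at hm

lemma closed_head_sublevel (M : ℕ) (k : ℝ≥0∞) :
    IsClosed {x : ℕ → ℝ | N.Φ (Set.indicator (Set.Iio M) x) ≤ k} := by
  set s := {x : ℕ → ℝ | N.Φ (Set.indicator (Set.Iio M) x) ≤ k} with hs
  rw [← closure_subset_iff_isClosed]
  intro x₀ hx₀
  show N.Φ (Set.indicator (Set.Iio M) x₀) ≤ k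
  apply ENNReal.le_of_forall_pos_le_add
  intro ε hε hk
  set T : ℝ≥0∞ := ∑ n ∈ Finset.range M, N.Φ (esq n) with hT
  have hTtop : T ≠ ⊤ := by
    refine (ENNReal.sum_lt_top.2 fun n _ => ?_).ne
    exact lt_top_iff_ne_top.2 (esq_phi_fin N n)
  obtain ⟨r, hr0, hrT⟩ := exists_small_r T ε hTtop (by exact_mod_cast hε)
  set U : Set (ℕ → ℝ) := ⋂ n ∈ Finset.range M, (fun y : ℕ → ℝ => y n) ⁻¹' (Metric.ball (x₀ n) r) with hU
  have hUopen : IsOpen U :=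
    isOpen_biInter_finset fun n _ => (continuous_apply n).isOpen_preimage _ Metric.isOpen_ball
  have hx₀U : x₀ ∈ U := by
    simp only [hU, Set.mem_iInter, Set.mem_preimage, Metric.mem_ball, dist_self]
    intro n _
    exact hr0
  obtain ⟨x₁, hx₁U, hx₁s⟩ := _root_.mem_closure_iff.1 hx₀ U hUopen hx₀U
  have hdiff : ∀ n ∈ Finset.range M, |x₀ n - x₁ n| < r := by
    intro n hn
    have := Set.mem_iInter₂.1 hx₁U n hn
    simp only [Set.mem_preimage, Metric.mem_ball, Real.dist_eq] at this
    rw [abs_sub_comm]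
    exact this
  have htri : Set.indicator (Set.Iio M) x₀
      = Set.indicator (Set.Iio M) x₁ + Set.indicator (Set.Iio M) (x₀ - x₁) := by
    funext n
    by_cases h : n ∈ Set.Iio M <;> simp [Set.indicator_apply, h]
  have h1 : N.Φ (Set.indicator (Set.Iio M) x₀)
      ≤ N.Φ (Set.indicator (Set.Iio M) x₁) + N.Φ (Set.indicator (Set.Iio M) (x₀ - x₁)) := by
    rw [htri]; exact N.add_le _ _
  have h2 : N.Φ (Set.indicator (Set.Iio M) (x₀ - x₁)) ≤ ENNReal.ofReal r * T := by
    refine le_trans (sum_bound N _ M) ?_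
    rw [hT, Finset.mul_sum]
    refine Finset.sum_le_sum fun n hn => ?_
    refine mul_le_mul_left ?_ _
    exact ENNReal.ofReal_le_ofReal (le_of_lt (by simpa using hdiff n hn))
  calc N.Φ (Set.indicator (Set.Iio M) x₀)
      ≤ k + ENNReal.ofReal r * T := le_trans h1 (add_le_add hx₁s h2)
    _ ≤ k + ε := add_le_add_right hrT.le k

lemma closed_sublevel (k : ℝ≥0∞) : IsClosed {x : ℕ → ℝ | N.Φ x ≤ k} := by
  have : {x : ℕ → ℝ | N.Φ x ≤ k}
      = ⋂ M : ℕ, {x : ℕ → ℝ | N.Φ (Set.indicator (Set.Iio M) x) ≤ k} := by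
    ext x
    simp only [Set.mem_setOf_eq, Set.mem_iInter]
    rw [N.lsc x, iSup_le_iff]
  rw [this]
  exact isClosed_iInter fun M => closed_head_sublevel N M k

lemma fin_fsigma : IsFsigmaPi (FIN N) := by
  refine ⟨fun k => {x : ℕ → ℝ | N.Φ x ≤ k}, fun k => closed_sublevel N k, ?_⟩
  ext x
  simp only [FIN, Set.mem_setOf_eq, Set.mem_iUnion]
  constructor
  · intro hx
    obtain ⟨n, hn⟩ := ENNReal.exists_nat_gt hx.ne
    exact ⟨n, hn.le⟩
  · rintro ⟨n, hn⟩
    exact lt_of_le_of_lt hn (lt_top_iff_ne_top.2 (ENNReal.natCast_ne_top n))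


lemma sep_of_eq (h : FIN N = EXH N) :
    ∃ D : Set (ℕ → ℝ), D.Countable ∧ D ⊆ FIN N ∧
      ∀ x ∈ FIN N, ∀ ε : ℝ≥0∞, 0 < ε → ∃ y ∈ D, N.Φ (x - y) < ε := by
  classical
  set D : Set (ℕ → ℝ) := Set.range (fun p : ℕ →₀ ℚ => fun n => ((p n : ℚ) : ℝ)) with hD
  have hDc : D.Countable := Set.countable_range _
  have hDfin : D ⊆ FIN N := by
    rintro _ ⟨p, rfl⟩
    apply N.finite
    apply Set.Finite.subset p.finite_support
    intro n hn
    simp only [Function.mem_support] at hn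
    simp only [Function.mem_support]
    intro hc
    rw [hc] at hn
    simp at hn
  refine ⟨D, hDc, hDfin, fun x hx ε hε => ?_⟩
  set ε' : ℝ≥0∞ := min ε 1 with hε'
  have hε'0 : ε' ≠ 0 := (lt_min hε zero_lt_one).ne'
  have hε'2 : 0 < ε' / 2 := ENNReal.half_pos hε'0
  have hxE : x ∈ EXH N := h ▸ hx
  obtain ⟨M, hM⟩ := (hxE.eventually_lt_const hε'2).exists
  set T : ℝ≥0∞ := ∑ n ∈ Finset.range M, N.Φ (esq n) with hT
  have hTtop : T ≠ ⊤ :=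
    (ENNReal.sum_lt_top.2 fun n _ => lt_top_iff_ne_top.2 (esq_phi_fin N n)).ne
  obtain ⟨r, hr0, hrT⟩ := exists_small_r T (ε' / 2) hTtop hε'2
  have hq : ∀ n : ℕ, ∃ q : ℚ, |x n - (q : ℝ)| < r := fun n => exists_rat_near (x n) hr0
  choose q hqr using hq
  set p : ℕ →₀ ℚ := Finsupp.onFinset (Finset.range M)
    (fun n => if n < M then q n else 0)
    (fun n hn => by simp only [Finset.mem_range]; by_contra hc; simp [hc] at hn) with hp
  set y : ℕ → ℝ := fun n => ((p n : ℚ) : ℝ) with hy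
  have hyD : y ∈ D := ⟨p, rfl⟩
  have hyn : ∀ n, y n = if n < M then ((q n : ℚ) : ℝ) else 0 := by
    intro n
    simp only [hy, hp, Finsupp.onFinset_apply]
    split <;> simp
  have hsplit : x - y = Set.indicator (Set.Iio M) (x - y) + Set.indicator {n | M ≤ n} x := by
    funext n
    by_cases hn : n < M
    · simp [Set.indicator_apply, Set.mem_Iio, hn, not_le.2 hn]
    · simp [Set.indicator_apply, Set.mem_Iio, hn, le_of_not_gt hn, hyn n]
  have h1 : N.Φ (Set.indicator (Set.Iio M) (x - y)) < ε' / 2 := by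
    refine lt_of_le_of_lt (le_trans (sum_bound N _ M) ?_) hrT
    rw [hT, Finset.mul_sum]
    refine Finset.sum_le_sum fun n hn => mul_le_mul_left ?_ _
    apply ENNReal.ofReal_le_ofReal
    simp only [Finset.mem_range] at hn
    simp only [Pi.sub_apply, hyn n, hn, if_true]
    exact (hqr n).le
  have h2 : N.Φ (x - y) < ε' := by
    calc N.Φ (x - y) ≤ N.Φ (Set.indicator (Set.Iio M) (x - y))
          + N.Φ (Set.indicator {n | M ≤ n} x) := by
          nth_rewrite 1 [hsplit]; exact N.add_le _ _
      _ < ε' / 2 + ε' / 2 := ENNReal.add_lt_add h1 hM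
      _ = ε' := ENNReal.add_halves ε'
  exact ⟨y, hyD, lt_of_lt_of_le h2 (min_le_left ε 1)⟩


lemma indicator_tail_eq (A : Set ℕ) (σ : ℕ → ℝ) (n : ℕ) :
    Set.indicator (A \ Set.Iio n) σ = Set.indicator {m | n ≤ m} (Set.indicator A σ) := by
  funext m
  by_cases h1 : m ∈ A <;> by_cases h2 : n ≤ m <;>
    simp [Set.indicator_apply, Set.mem_Iio, h1, h2, not_lt.2, lt_of_not_ge]

lemma four_of_eq (h : FIN N = EXH N) (σ : ℕ → ℝ) :
    {A : Set ℕ | Tendsto (fun n : ℕ => N.Φ (Set.indicator (A \ Set.Iio n) σ))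
        atTop (𝓝 0)} =
      {A : Set ℕ | N.Φ (Set.indicator A σ) < ⊤} := by
  ext A
  simp only [Set.mem_setOf_eq]
  have hA : ∀ n : ℕ, N.Φ (Set.indicator (A \ Set.Iio n) σ)
      = N.Φ (Set.indicator {m | n ≤ m} (Set.indicator A σ)) := fun n => by
    rw [indicator_tail_eq]
  constructor
  · intro hT
    have : Set.indicator A σ ∈ EXH N := by
      show Tendsto _ _ _
      refine hT.congr fun n => hA n
    rw [← h] at this
    exact this
  · intro hF
    have : Set.indicator A σ ∈ EXH N := h ▸ (hF : Set.indicator A σ ∈ FIN N)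
    exact this.congr fun n => (hA n).symm

lemma eq_of_four
    (h : ∀ σ : ℕ → ℝ,
      {A : Set ℕ | Tendsto (fun n : ℕ => N.Φ (Set.indicator (A \ Set.Iio n) σ))
          atTop (𝓝 0)} =
        {A : Set ℕ | N.Φ (Set.indicator A σ) < ⊤}) :
    FIN N = EXH N := by
  apply Set.Subset.antisymm _ (exh_subset_fin N)
  intro x hx
  have huniv : Set.indicator (Set.univ : Set ℕ) x = x := by
    funext n; simp
  have hmem : (Set.univ : Set ℕ) ∈
      {A : Set ℕ | N.Φ (Set.indicator A x) < ⊤} := by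
    simp only [Set.mem_setOf_eq, huniv]
    exact hx
  rw [← h x] at hmem
  have hT := (hmem : Tendsto _ _ _)
  show Tendsto _ _ _
  refine hT.congr fun n => ?_
  rw [indicator_tail_eq, huniv]


lemma not_countable_bool : ¬ Countable (ℕ → Bool) := by
  intro h
  have : Countable (Set ℕ) :=
    .of_equiv (ℕ → Bool) (Equiv.arrowCongr (.refl ℕ) (Equiv.propEquivBool)).symm
  obtain ⟨f, hf⟩ := (countable_iff_exists_injective (Set ℕ)).1 this
  exact Function.cantor_injective f hf

lemma eq_of_sep
    (hsep : ∃ D : Set (ℕ → ℝ), D.Countable ∧ D ⊆ FIN N ∧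
      ∀ x ∈ FIN N, ∀ ε : ℝ≥0∞, 0 < ε → ∃ y ∈ D, N.Φ (x - y) < ε) :
    FIN N = EXH N := by
  classical
  obtain ⟨D, hDc, _, happrox⟩ := hsep
  apply Set.Subset.antisymm _ (exh_subset_fin N)
  intro x hx
  by_contra hnx
  obtain ⟨δ, M, hδ0, hδtop, hM0, hMmono, hblocks⟩ := blocks N x hx hnx
  obtain ⟨B, hB1, hB2, hB3, _⟩ := blockIdx M hM0 hMmono
  have hBeq : ∀ k n, M k ≤ n → n < M (k+1) → B n = k := by
    intro k n h1 h2
    have hk1 : k ≤ B n := hB3 k n h1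
    have hk2 : B n < k + 1 := by
      by_contra hc
      push_neg at hc
      have := (hMmono.monotone hc).trans (hB1 n)
      omega
    omega
  set xS : (ℕ → Bool) → (ℕ → ℝ) := fun S n => if S (B n) = true then x n else 0 with hxS
  have hxSfin : ∀ S, xS S ∈ FIN N := by
    intro S
    refine lt_of_le_of_lt (N.mono _ x fun n => ?_) hx
    by_cases h : S (B n) = true <;> simp [hxS, h]
  have hdist : ∀ S T : ℕ → Bool, S ≠ T → δ ≤ N.Φ (xS S - xS T) := by
    intro S T hST
    obtain ⟨k, hk⟩ : ∃ k, S k ≠ T k := by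
      by_contra hc
      push_neg at hc
      exact hST (funext hc)
    refine le_trans (hblocks k) (N.mono _ _ fun n => ?_)
    by_cases hn : M k ≤ n ∧ n < M (k+1)
    · have hBn : B n = k := hBeq k n hn.1 hn.2
      simp only [Set.indicator_apply, Set.mem_Ico, hn, if_true, Pi.sub_apply, hxS, hBn]
      rcases Bool.eq_false_or_eq_true (S k) with h1 | h1 <;>
        rcases Bool.eq_false_or_eq_true (T k) with h2 | h2 <;>
          simp [h1, h2] at hk ⊢
    · simp [Set.indicator_apply, Set.mem_Ico, hn]
  set ε : ℝ≥0∞ := δ / 2 / 2 with hε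
  have hε0 : 0 < ε := ENNReal.half_pos (ENNReal.half_pos hδ0.ne').ne'
  have hchoice : ∀ S : ℕ → Bool, ∃ y ∈ D, N.Φ (xS S - y) < ε := fun S =>
    happrox (xS S) (hxSfin S) ε hε0
  choose y hyD hyΦ using hchoice
  have hyinj : Function.Injective y := by
    intro S T hST
    by_contra hne
    have h1 : N.Φ (xS S - xS T) ≤ N.Φ (xS S - y S) + N.Φ (xS T - y T) := by
      have heq : xS S - xS T = (xS S - y S) + (y T - xS T) := by
        rw [hST]; ring
      rw [heq]
      refine le_trans (N.add_le _ _) ?_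
      rw [phi_sub_comm N (y T) (xS T)]
    have h2 : N.Φ (xS S - xS T) < ε + ε :=
      lt_of_le_of_lt h1 (ENNReal.add_lt_add (hyΦ S) (hyΦ T))
    have h3 : ε + ε = δ / 2 := ENNReal.add_halves _
    rw [h3] at h2
    have := lt_of_le_of_lt (hdist S T hne) h2
    exact absurd this (not_lt.2 (ENNReal.half_le_self))
  apply not_countable_bool
  have huniv : (Set.univ : Set (ℕ → Bool)).Countable := by
    have h1 : (y ⁻¹' D).Countable := hDc.preimage hyinj
    exact h1.mono (fun S _ => hyD S)
  exact Set.countable_univ_iff.1 huniv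


/-- weight function for the Baire category argument -/
noncomputable def wgt (S : ℕ → Bool) (k : ℕ) : ℝ :=
  ∏ j ∈ Finset.range k, (if S j then (2⁻¹ : ℝ) else 1)

lemma wgt_pos (S : ℕ → Bool) (k : ℕ) : 0 < wgt S k := by
  apply Finset.prod_pos
  intro j _
  split <;> norm_num

lemma wgt_le_one (S : ℕ → Bool) (k : ℕ) : wgt S k ≤ 1 := by
  apply Finset.prod_le_one
  · intro j _; split <;> norm_num
  · intro j _; split <;> norm_num

lemma wgt_antitone (S : ℕ → Bool) : Antitone (wgt S) := by
  apply antitone_nat_of_succ_le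
  intro k
  rw [wgt, Finset.prod_range_succ]
  have h1 : (if S k then (2⁻¹:ℝ) else 1) ≤ 1 := by split <;> norm_num
  have h2 := (wgt_pos S k).le
  calc wgt S k * (if S k then (2⁻¹:ℝ) else 1) ≤ wgt S k * 1 := by
        exact mul_le_mul_of_nonneg_left h1 h2
    _ = wgt S k := mul_one _

lemma wgt_eq_pow (S : ℕ → Bool) (k : ℕ) :
    wgt S k = (2⁻¹ : ℝ) ^ ((Finset.range k).filter (fun j => S j = true)).card := by
  classical
  rw [wgt, Finset.prod_ite, Finset.prod_const, Finset.prod_const, one_pow, mul_one]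

lemma card_unbounded (S : ℕ → Bool) (hinf : {j | S j = true}.Infinite) (m : ℕ) :
    ∃ k, m ≤ ((Finset.range k).filter (fun j => S j = true)).card := by
  classical
  induction m with
  | zero => exact ⟨0, Nat.zero_le _⟩
  | succ m ih =>
    obtain ⟨k, hk⟩ := ih
    obtain ⟨j, hjS, hjk⟩ := hinf.exists_gt k
    refine ⟨j + 1, ?_⟩
    have hsub : insert j ((Finset.range k).filter (fun i => S i = true))
        ⊆ (Finset.range (j+1)).filter (fun i => S i = true) := by
      intro i hi
      rcases Finset.mem_insert.1 hi with h | h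
      · subst h
        simp only [Finset.mem_filter, Finset.mem_range]
        exact ⟨by omega, hjS⟩
      · simp only [Finset.mem_filter, Finset.mem_range] at h ⊢
        exact ⟨by omega, h.2⟩
    have hcard := Finset.card_le_card hsub
    rw [Finset.card_insert_of_notMem (by simp [Finset.mem_filter, Finset.mem_range]; omega)] at hcard
    omega

lemma wgt_tendsto_zero (S : ℕ → Bool) (hinf : {j | S j = true}.Infinite) :
    Tendsto (wgt S) atTop (𝓝 0) := by
  have h1 : Tendsto (fun k => ((Finset.range k).filter (fun j => S j = true)).card)
      atTop atTop := by
    apply tendsto_atTop_atTop.2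
    intro m
    obtain ⟨k, hk⟩ := card_unbounded S hinf m
    refine ⟨k, fun k' hk' => le_trans hk (Finset.card_le_card ?_)⟩
    intro i hi
    simp only [Finset.mem_filter, Finset.mem_range] at hi ⊢
    exact ⟨by omega, hi.2⟩
  have h2 : Tendsto (fun m : ℕ => (2⁻¹:ℝ)^m) atTop (𝓝 0) :=
    tendsto_pow_atTop_nhds_zero_of_lt_one (by norm_num) (by norm_num)
  have := h2.comp h1
  refine this.congr fun k => ?_
  simp [wgt_eq_pow]

lemma wgt_eventually_const (S : ℕ → Bool) (m : ℕ) (hm2 : ∀ j, m ≤ j → S j = false) :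
    ∀ k, m ≤ k → wgt S k = wgt S m := by
  intro k hk
  induction k with
  | zero =>
    have h0 : m = 0 := by omega
    rw [h0]
  | succ k ih =>
    rcases Nat.lt_or_ge m (k+1) with h | h
    · have hmk : m ≤ k := by omega
      rw [wgt, Finset.prod_range_succ, ← wgt, ih hmk, hm2 k hmk]
      simp
    · have h1 : m = k + 1 := by omega
      rw [h1]


lemma eq_of_fsigma (h2 : IsFsigmaPi (EXH N)) : FIN N = EXH N := by
  classical
  obtain ⟨C, hCclosed, hCeq⟩ := h2
  have hCsub : ∀ n, C n ⊆ EXH N := fun n z hz => hCeq ▸ Set.mem_iUnion.2 ⟨n, hz⟩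
  apply Set.Subset.antisymm _ (exh_subset_fin N)
  intro x hx
  by_contra hnx
  obtain ⟨δ, M, hδ0, hδtop, hM0, hMmono, hblocks⟩ := blocks N x hx hnx
  obtain ⟨B, hB1, hB2, hB3, hB4⟩ := blockIdx M hM0 hMmono
  have hBeq : ∀ k n, M k ≤ n → n < M (k+1) → B n = k := by
    intro k n h1 h2
    have hk1 : k ≤ B n := hB3 k n h1
    have hk2 : B n < k + 1 := by
      by_contra hc
      push_neg at hc
      have := (hMmono.monotone hc).trans (hB1 n)
      omega
    omega
  have hBmono : Monotone B := by
    intro a b hab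
    by_contra hc
    push_neg at hc
    have h1 : B b + 1 ≤ B a := by omega
    have := (hMmono.monotone h1).trans (hB1 a)
    have := hB2 b
    omega
  -- the map g : 2^ℕ → ℝ^ℕ
  set g : (ℕ → Bool) → (ℕ → ℝ) := fun S n => wgt S (B n) * x n with hg
  have hgcont : Continuous g := by
    apply continuous_pi
    intro n
    apply Continuous.mul _ continuous_const
    apply continuous_finset_prod
    intro j _
    exact Continuous.comp (continuous_of_discreteTopology
      (f := fun b : Bool => if b then (2⁻¹:ℝ) else 1)) (continuous_apply j)
  -- tail estimate
  have htail : ∀ (S : ℕ → Bool) (L : ℕ),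
      N.Φ (Set.indicator {n | L ≤ n} (g S)) ≤ ENNReal.ofReal (wgt S (B L)) * N.Φ x := by
    intro S L
    have habs : wgt S (B L) = |wgt S (B L)| := (abs_of_pos (wgt_pos S (B L))).symm
    rw [habs, ← N.smul_eq]
    apply N.mono
    intro n
    by_cases hn : L ≤ n
    · simp only [Set.indicator_apply, Set.mem_setOf_eq, hn, if_true, Pi.smul_apply,
        smul_eq_mul, hg, abs_mul]
      apply mul_le_mul_of_nonneg_right _ (abs_nonneg (x n))
      rw [abs_of_pos (wgt_pos S (B n)), abs_of_pos (wgt_pos S (B L))]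
      exact wgt_antitone S (hBmono hn)
    · simp only [Set.indicator_apply, Set.mem_setOf_eq, hn, if_false]
      simp [abs_nonneg]
      positivity
  -- infinite support ⇒ g S ∈ EXH
  have hinfE : ∀ S : ℕ → Bool, {j | S j = true}.Infinite → g S ∈ EXH N := by
    intro S hinf
    show Tendsto _ _ _
    have h1 : Tendsto (fun L => wgt S (B L)) atTop (𝓝 0) :=
      (wgt_tendsto_zero S hinf).comp hB4
    have h2 : Tendsto (fun L => ENNReal.ofReal (wgt S (B L))) atTop (𝓝 0) := by
      have := (ENNReal.continuous_ofReal.tendsto 0).comp h1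
      simpa [Function.comp_def] using this
    have hub : Tendsto (fun L => ENNReal.ofReal (wgt S (B L)) * N.Φ x) atTop (𝓝 0) := by
      have h3 := ENNReal.Tendsto.mul_const h2 (Or.inr hx.ne)
      simpa using h3
    exact tendsto_of_tendsto_of_tendsto_of_le_of_le tendsto_const_nhds hub
      (fun L => zero_le) (fun L => htail S L)
  -- finite support ⇒ g S ∉ EXH
  have hfinE : ∀ S : ℕ → Bool, {j | S j = true}.Finite → g S ∉ EXH N := by
    intro S hfin hE
    obtain ⟨b, hb⟩ := hfin.bddAbove
    set m := b + 1 with hmdef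
    have hSfalse : ∀ j, m ≤ j → S j = false := by
      intro j hj
      by_contra hc
      have hSj : S j = true := by
        revert hc; cases S j <;> simp
      have : j ∈ {j | S j = true} := hSj
      have := hb this
      omega
    set c := wgt S m with hcdef
    have hc0 : 0 < c := wgt_pos S m
    have hpos : 0 < ENNReal.ofReal c * δ :=
      ENNReal.mul_pos (ENNReal.ofReal_pos.2 hc0).ne' hδ0.ne'
    have hlb : ∀ L, ENNReal.ofReal c * δ ≤ N.Φ (Set.indicator {n | L ≤ n} (g S)) := by
      intro L
      set k := max m (B L + 1) with hkdef
      have hmk : m ≤ k := le_max_left _ _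
      have hwk : wgt S k = c := wgt_eventually_const S m hSfalse k hmk
      have hLk : L < M k := lt_of_lt_of_le (hB2 L) (hMmono.monotone (le_max_right _ _))
      have habs : c = |c| := (abs_of_pos hc0).symm
      calc ENNReal.ofReal c * δ
          ≤ ENNReal.ofReal c * N.Φ (Set.indicator (Set.Ico (M k) (M (k+1))) x) :=
            mul_le_mul_right (hblocks k) _
        _ = N.Φ (c • Set.indicator (Set.Ico (M k) (M (k+1))) x) := by
            rw [N.smul_eq, ← habs]
        _ ≤ N.Φ (Set.indicator {n | L ≤ n} (g S)) := by
            apply N.mono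
            intro n
            by_cases hn : M k ≤ n ∧ n < M (k+1)
            · have hBn : B n = k := hBeq k n hn.1 hn.2
              have hLn : L ≤ n := le_trans hLk.le hn.1
              simp only [Pi.smul_apply, smul_eq_mul, Set.indicator_apply, Set.mem_Ico,
                Set.mem_setOf_eq, hn, if_true, hLn, hg, hBn, hwk]
              simp
            · simp only [Pi.smul_apply, smul_eq_mul, Set.indicator_apply, Set.mem_Ico, hn,
                if_false, mul_zero, abs_zero]
              exact abs_nonneg _
    obtain ⟨L, hL⟩ := (hE.eventually_lt_const hpos).exists
    exact absurd (hlb L) (not_le.2 hL)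
  -- enumeration of finitely supported Booleans and the closed covering family
  classical
  set e : Finset ℕ → (ℕ → Bool) := fun t => fun n => decide (n ∈ t) with he
  set F : ℕ ⊕ Finset ℕ → Set (ℕ → Bool) :=
    fun i => Sum.elim (fun n => g ⁻¹' C n) (fun t => {e t}) i with hF
  have hFclosed : ∀ i, IsClosed (F i) := by
    rintro (n | t)
    · exact (hCclosed n).preimage hgcont
    · exact isClosed_singleton
  have hFcover : ⋃ i, F i = Set.univ := by
    rw [Set.eq_univ_iff_forall]
    intro S
    rw [Set.mem_iUnion]
    by_cases hfin : {j | S j = true}.Finite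
    · refine ⟨Sum.inr hfin.toFinset, ?_⟩
      show S ∈ {e hfin.toFinset}
      rw [Set.mem_singleton_iff]
      funext j
      simp only [he, Set.Finite.mem_toFinset, Set.mem_setOf_eq]
      cases hSj : S j <;> simp [hSj]
    · have hE : g S ∈ EXH N := hinfE S hfin
      rw [hCeq] at hE
      obtain ⟨n, hn⟩ := Set.mem_iUnion.1 hE
      exact ⟨Sum.inl n, hn⟩
  obtain ⟨i, S₀, hS₀⟩ := nonempty_interior_of_iUnion_of_closed hFclosed hFcover
  cases i with
  | inl n =>
    obtain ⟨I, u, hIu, hsub⟩ := isOpen_pi_iff.1 isOpen_interior S₀ hS₀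
    set S₁ : ℕ → Bool := fun j => if j ∈ I then S₀ j else false with hS₁def
    have hS₁mem : S₁ ∈ (↑I : Set ℕ).pi u := by
      intro a ha
      simp only [hS₁def]
      rw [if_pos (by exact_mod_cast ha)]
      exact (hIu a (by exact_mod_cast ha)).2
    have hgS₁ : g S₁ ∈ C n := by
      have h1 : S₁ ∈ F (Sum.inl n) := interior_subset (hsub hS₁mem)
      simpa only [hF, Sum.elim_inl, Set.mem_preimage] using h1
    have hS₁fin : {j | S₁ j = true}.Finite := by
      apply Set.Finite.subset I.finite_toSet
      intro j hj
      simp only [Set.mem_setOf_eq, hS₁def] at hj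
      by_contra hc
      rw [if_neg (by exact_mod_cast hc)] at hj
      exact Bool.false_ne_true hj
    exact hfinE S₁ hS₁fin (hCsub n hgS₁)
  | inr t =>
    obtain ⟨I, u, hIu, hsub⟩ := isOpen_pi_iff.1 isOpen_interior S₀ hS₀
    obtain ⟨j₀, hj₀⟩ := Finset.exists_notMem I
    set S₁ : ℕ → Bool := Function.update S₀ j₀ (!S₀ j₀) with hS₁def
    have hS₁mem : S₁ ∈ (↑I : Set ℕ).pi u := by
      intro a ha
      have hane : a ≠ j₀ := fun hc => hj₀ (hc ▸ (by exact_mod_cast ha))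
      simp only [hS₁def]
      rw [Function.update_of_ne hane]
      exact (hIu a (by exact_mod_cast ha)).2
    have h1 : S₁ ∈ (F (Sum.inr t)) := interior_subset (hsub hS₁mem)
    have h0 : S₀ ∈ (F (Sum.inr t)) := interior_subset hS₀
    simp only [hF, Sum.elim_inr, Set.mem_singleton_iff] at h1 h0
    have heq : S₁ j₀ = S₀ j₀ := by rw [h1, h0]
    rw [hS₁def, Function.update_self] at heq
    exact Bool.not_ne_self _ heq

end Basics


theorem stmt7 (N : NiceExtNorm) :
    [ FIN N = EXH N,
      IsFsigmaPi (EXH N),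
      ∃ D : Set (ℕ → ℝ), D.Countable ∧ D ⊆ FIN N ∧
        ∀ x ∈ FIN N, ∀ ε : ℝ≥0∞, 0 < ε → ∃ y ∈ D, N.Φ (x - y) < ε,
      ∀ σ : ℕ → ℝ,
        {A : Set ℕ | Tendsto (fun n : ℕ => N.Φ (Set.indicator (A \ Set.Iio n) σ))
            atTop (𝓝 0)} =
          {A : Set ℕ | N.Φ (Set.indicator A σ) < ⊤} ].TFAE := by
  tfae_have 1 → 2 := fun h => h ▸ fin_fsigma N
  tfae_have 2 → 1 := eq_of_fsigma N
  tfae_have 1 → 3 := sep_of_eq N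
  tfae_have 3 → 1 := eq_of_sep N
  tfae_have 1 → 4 := four_of_eq N
  tfae_have 4 → 1 := eq_of_four N
  tfae_finish
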